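/- arXiv:2507.14907 — 3 statements merged into one kernel-verified Lean document; each statement's English description precedes it below -/
import Mathlib

section
/- For any two bivectors φ, ψ ∈ Λ²V of the same rank on a finite-dimensional vector space V, there exists a linear automorphism f ∈ GL(V) such that (Λ²f)(φ) = ψ. -/
/-!
An alternating form `φ ≠ 0` has a hyperbolic pair `u, v` with `φ u v = 1`, and `V` splits as the
plane `⟨u, v⟩` plus its `φ`-orthogonal `P = ker (φ u) ⊓ ker (φ v)`, on which `φ` restricts to an
alternating form with the same kernel. Induction on `dim V` therefore shows that an alternating
form is determined up to isometry by `dim V` and `dim (ker φ)`, i.e. by its rank.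
-/

open Module LinearMap

namespace LinearMap

variable {k V W : Type*} [Field k] [AddCommGroup V] [Module k V] [AddCommGroup W] [Module k W]

theorem eq_zero_iff_finrank_ker_eq [FiniteDimensional k V] (f : V →ₗ[k] W) :
    f = 0 ↔ finrank k (ker f) = finrank k V := by
  rw [← ker_eq_top, Submodule.eq_top_iff_finrank_eq]

theorem exists_apply_apply_eq_one {φ : V →ₗ[k] W →ₗ[k] k} (hφ : φ ≠ 0) :
    ∃ u v, φ u v = 1 := by
  obtain ⟨u, v, huv⟩ : ∃ u v, φ u v ≠ 0 := by
    by_contra! h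
    exact hφ (ext₂ h)
  exact ⟨u, (φ u v)⁻¹ • v, by rw [map_smul, smul_eq_mul, inv_mul_cancel₀ huv]⟩

def planeOrthogonal (φ : V →ₗ[k] V →ₗ[k] k) (u v : V) : Submodule k V :=
  ker (φ u) ⊓ ker (φ v)

@[simp]
theorem mem_planeOrthogonal {φ : V →ₗ[k] V →ₗ[k] k} {u v w : V} :
    w ∈ planeOrthogonal φ u v ↔ φ u w = 0 ∧ φ v w = 0 :=
  Iff.rfl

def planeSum (φ : V →ₗ[k] V →ₗ[k] k) (u v : V) : k × k × planeOrthogonal φ u v →ₗ[k] V :=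
  (toSpanSingleton k V u).coprod ((toSpanSingleton k V v).coprod (planeOrthogonal φ u v).subtype)

@[simp]
theorem planeSum_apply (φ : V →ₗ[k] V →ₗ[k] k) (u v : V) (p : k × k × planeOrthogonal φ u v) :
    planeSum φ u v p = p.1 • u + p.2.1 • v + p.2.2 := by
  simp [planeSum, add_assoc]

namespace IsAlt

variable {φ : V →ₗ[k] V →ₗ[k] k} (hφ : φ.IsAlt) {u v : V} (huv : φ u v = 1)
include hφ huv

theorem apply_planeSum_apply_planeSum (p q : k × k × planeOrthogonal φ u v) :
    φ (planeSum φ u v p) (planeSum φ u v q) = p.1 * q.2.1 - p.2.1 * q.1 + φ p.2.2 q.2.2 := by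
  obtain ⟨a, b, w, hw⟩ := p
  obtain ⟨c, d, w', hw'⟩ := q
  obtain ⟨hwu, hwv⟩ := mem_planeOrthogonal.mp hw
  obtain ⟨hw'u, hw'v⟩ := mem_planeOrthogonal.mp hw'
  have hvu : φ v u = -1 := by rw [← hφ.neg, huv]
  have hwu' : φ w u = 0 := by rw [← hφ.neg, hwu, neg_zero]
  have hwv' : φ w v = 0 := by rw [← hφ.neg, hwv, neg_zero]
  simp only [planeSum_apply, map_add, map_smul, add_apply, smul_apply, smul_eq_mul,
    hφ.self_eq_zero, huv, hvu, hwu', hwv', hw'u, hw'v]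
  ring

theorem planeSum_injective : Function.Injective (planeSum φ u v) := by
  rw [← ker_eq_bot, ker_eq_bot']
  rintro ⟨a, b, w⟩ h
  have hvu : φ v u = -1 := by rw [← hφ.neg, huv]
  obtain ⟨hwu, hwv⟩ := mem_planeOrthogonal.mp w.2
  have hb := congrArg (φ u) h
  have ha := congrArg (φ v) h
  simp only [planeSum_apply, map_add, map_smul, smul_eq_mul, hφ.self_eq_zero, huv, hvu, hwu, hwv,
    map_zero] at ha hb
  obtain rfl : a = 0 := by linear_combination -ha
  obtain rfl : b = 0 := by linear_combination hb
  simp only [planeSum_apply, zero_smul, zero_add, ZeroMemClass.coe_eq_zero] at h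
  simp [h]

theorem planeSum_surjective : Function.Surjective (planeSum φ u v) := by
  intro x
  have hvu : φ v u = -1 := by rw [← hφ.neg, huv]
  refine ⟨(φ x v, φ u x, ⟨x - φ x v • u - φ u x • v, mem_planeOrthogonal.mpr ⟨?_, ?_⟩⟩), ?_⟩
  · simp only [map_sub, map_smul, smul_eq_mul, hφ.self_eq_zero, huv]
    ring
  · simp only [map_sub, map_smul, smul_eq_mul, hφ.self_eq_zero, hvu, ← hφ.neg x v]
    ring
  · simp only [planeSum_apply]
    abel

noncomputable def planeEquiv : (k × k × planeOrthogonal φ u v) ≃ₗ[k] V :=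
  .ofBijective (planeSum φ u v) ⟨hφ.planeSum_injective huv, hφ.planeSum_surjective huv⟩

@[simp]
theorem planeEquiv_apply (p : k × k × planeOrthogonal φ u v) :
    hφ.planeEquiv huv p = planeSum φ u v p :=
  rfl

theorem finrank_planeOrthogonal_add_two [FiniteDimensional k V] :
    finrank k (planeOrthogonal φ u v) + 2 = finrank k V := by
  have := (hφ.planeEquiv huv).finrank_eq
  simp only [finrank_prod, finrank_self] at this
  omega

omit huv in
theorem ker_le_planeOrthogonal : ker φ ≤ planeOrthogonal φ u v := by
  intro x hx
  rw [mem_ker] at hx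
  simp [← hφ.neg x u, ← hφ.neg x v, hx]

theorem ker_domRestrict₁₂_planeOrthogonal :
    ker (φ.domRestrict₁₂ (planeOrthogonal φ u v) (planeOrthogonal φ u v)) =
      (ker φ).comap (planeOrthogonal φ u v).subtype := by
  ext w
  simp only [mem_ker, Submodule.mem_comap, Submodule.coe_subtype]
  refine ⟨fun hw => ext fun x => ?_,
    fun hw => ext fun x => by rw [domRestrict₁₂_apply, hw, zero_apply, zero_apply]⟩
  obtain ⟨q, rfl⟩ := hφ.planeSum_surjective huv x
  have hw0 : planeSum φ u v (0, 0, w) = w := by simp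
  rw [← hw0, hφ.apply_planeSum_apply_planeSum huv, zero_mul, zero_mul, sub_zero, zero_add]
  exact DFunLike.congr_fun hw q.2.2

theorem finrank_ker_domRestrict₁₂_planeOrthogonal :
    finrank k (ker (φ.domRestrict₁₂ (planeOrthogonal φ u v) (planeOrthogonal φ u v))) =
      finrank k (ker φ) := by
  rw [hφ.ker_domRestrict₁₂_planeOrthogonal huv]
  exact (Submodule.comapSubtypeEquivOfLe hφ.ker_le_planeOrthogonal).finrank_eq

theorem exists_isometry_of_isometry_planeOrthogonal {ψ : W →ₗ[k] W →ₗ[k] k} (hψ : ψ.IsAlt)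
    {u' v' : W} (hu'v' : ψ u' v' = 1) (g : planeOrthogonal φ u v ≃ₗ[k] planeOrthogonal ψ u' v')
    (hg : ∀ x y, ψ (g x) (g y) = φ x y) : ∃ f : V ≃ₗ[k] W, ∀ x y, ψ (f x) (f y) = φ x y := by
  let f := (hφ.planeEquiv huv).symm ≪≫ₗ
    (LinearEquiv.refl k k).prodCongr ((LinearEquiv.refl k k).prodCongr g) ≪≫ₗ hψ.planeEquiv hu'v'
  have hf (p : k × k × planeOrthogonal φ u v) :
      f (planeSum φ u v p) = planeSum ψ u' v' (p.1, p.2.1, g p.2.2) := by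
    rw [← planeEquiv_apply hφ huv]
    simp only [f, LinearEquiv.trans_apply, LinearEquiv.symm_apply_apply,
      LinearEquiv.prodCongr_apply, LinearEquiv.refl_apply]
    rfl
  refine ⟨f, fun x y => ?_⟩
  obtain ⟨p, rfl⟩ := hφ.planeSum_surjective huv x
  obtain ⟨q, rfl⟩ := hφ.planeSum_surjective huv y
  rw [hf, hf, hψ.apply_planeSum_apply_planeSum hu'v', hφ.apply_planeSum_apply_planeSum huv, hg]

end IsAlt

theorem IsAlt.exists_isometry_of_finrank_ker_eq [FiniteDimensional k V] [FiniteDimensional k W]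
    {φ : V →ₗ[k] V →ₗ[k] k} {ψ : W →ₗ[k] W →ₗ[k] k} (hφ : φ.IsAlt) (hψ : ψ.IsAlt)
    (hdim : finrank k V = finrank k W) (hker : finrank k (ker φ) = finrank k (ker ψ)) :
    ∃ f : V ≃ₗ[k] W, ∀ x y, ψ (f x) (f y) = φ x y := by
  induction hn : finrank k V using Nat.strong_induction_on generalizing V W with
  | _ n ih =>
  have hzero : φ = 0 ↔ ψ = 0 := by
    rw [eq_zero_iff_finrank_ker_eq, eq_zero_iff_finrank_ker_eq, hker, hdim]
  by_cases hφ0 : φ = 0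
  · refine ⟨LinearEquiv.ofFinrankEq V W hdim, fun x y => ?_⟩
    simp [hφ0, hzero.mp hφ0]
  obtain ⟨u, v, huv⟩ := exists_apply_apply_eq_one hφ0
  obtain ⟨u', v', hu'v'⟩ := exists_apply_apply_eq_one (hzero.not.mp hφ0)
  have hφP := hφ.finrank_planeOrthogonal_add_two huv
  have hψP := hψ.finrank_planeOrthogonal_add_two hu'v'
  obtain ⟨g, hg⟩ := ih _ (by omega)
    (φ := φ.domRestrict₁₂ (planeOrthogonal φ u v) (planeOrthogonal φ u v))
    (ψ := ψ.domRestrict₁₂ (planeOrthogonal ψ u' v') (planeOrthogonal ψ u' v'))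
    (fun x => hφ x) (fun x => hψ x) (by omega)
    (by rw [hφ.finrank_ker_domRestrict₁₂_planeOrthogonal huv,
      hψ.finrank_ker_domRestrict₁₂_planeOrthogonal hu'v', hker]) rfl
  exact hφ.exists_isometry_of_isometry_planeOrthogonal huv hψ hu'v' g hg

end LinearMap

theorem bivectors_same_rank_equivalent_general
    {k V : Type*} [Field k] [AddCommGroup V] [Module k V] [FiniteDimensional k V]
    (φ ψ : V →ₗ[k] V →ₗ[k] k)
    (hφ : ∀ v : V, φ v v = 0) (hψ : ∀ v : V, ψ v v = 0)
    (hrank : Module.finrank k (LinearMap.range φ) = Module.finrank k (LinearMap.range ψ)) :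
    ∃ f : V ≃ₗ[k] V, ∀ v w : V, φ (f v) (f w) = ψ v w := by
  have hker : finrank k (ker ψ) = finrank k (ker φ) := by
    have := φ.finrank_range_add_finrank_ker
    have := ψ.finrank_range_add_finrank_ker
    omega
  exact IsAlt.exists_isometry_of_finrank_ker_eq hψ hφ rfl hker

/-- For any two bivectors (alternating bilinear forms, in characteristic ≠ 2) of the
same rank on a finite-dimensional vector space `V`, there is a linear automorphism
`f ∈ GL(V)` carrying one to the other. -/
theorem bivectors_same_rank_equivalent
    {k V : Type*} [Field k] [AddCommGroup V] [Module k V] [FiniteDimensional k V]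
    (h2 : (2 : k) ≠ 0)
    (φ ψ : V →ₗ[k] V →ₗ[k] k)
    (hφ : ∀ v : V, φ v v = 0) (hψ : ∀ v : V, ψ v v = 0)
    (hrank : Module.finrank k (LinearMap.range φ) = Module.finrank k (LinearMap.range ψ)) :
    ∃ f : V ≃ₗ[k] V, ∀ v w : V, φ (f v) (f w) = ψ v w :=
  bivectors_same_rank_equivalent_general φ ψ hφ hψ hrank
end

section
/- Let W be a 5-dimensional vector space over a field k of characteristic zero with basis x₁,…,x₅, and let φ₁ = x₁∧x₂ + x₃∧x₄, φ₂ = x₁∧x₃ + x₄∧x₅, φ₃ = x₁∧x₅ + x₂∧x₃. Then every nonzero linear combination αφ₁ + βφ₂ + γφ₃ has rank 4; equivalently, (αφ₁+βφ₂+γφ₃)∧(αφ₁+βφ₂+γφ₃) = 0 implies α = β = γ = 0. -/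
/-!
Expand `ψ = ∑ₜ cₜ e_{pₜ}` over six basis bivectors. The coordinate of a 4-form along
`e_{s₀} ∧ ⋯ ∧ e_{s₃}` sends `v₀ ∧ ⋯ ∧ v₃` to the determinant of the `s`-columns of `(vᵢ)`, so the
coordinate of `ψ ∧ ψ` is the quadratic form `∑ cₜ cₜ' G_s(t, t')`, whose integer Gram matrix `G_s`
records the sign of `e_{pₜ} ∧ e_{pₜ'}` along `e_s`. Along `e₀₁₂₃`, `e₀₁₂₄` and `e₀₂₃₄` these
coordinates are `2α²`, `2γ²` and `2(β² + αγ)`; in characteristic zero their vanishing forces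
`α = γ = 0` and then `β = 0`.
-/

open ExteriorAlgebra

namespace ExteriorAlgebra

variable {R I : Type*} [CommRing R]

/-- The coordinate along `e_{s 0} ∧ ⋯ ∧ e_{s (n-1)}`: it vanishes outside degree `n`. -/
noncomputable def minorForm (n : ℕ) (s : Fin n → I) : ExteriorAlgebra R (I → R) →ₗ[R] R :=
  liftAlternating (Pi.single (M := fun i => (I → R) [⋀^Fin i]→ₗ[R] R) n
    (Matrix.detRowAlternating.compLinearMap (LinearMap.funLeft R R s)))

theorem minorForm_ιMulti {n : ℕ} (s : Fin n → I) (v : Fin n → I → R) :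
    minorForm n s (ιMulti R n v) = (Matrix.of fun i j => v i (s j)).det := by
  rw [minorForm, liftAlternating_apply_ιMulti, Pi.single_eq_same]
  rfl

theorem ιMulti_two {M : Type*} [AddCommGroup M] [Module R M] (v : Fin 2 → M) :
    ιMulti R 2 v = ι R (v 0) * ι R (v 1) := by
  simp [ιMulti_apply, Matrix.vecTail]

variable [DecidableEq I]

def basisMinor {n : ℕ} (s t : Fin n → I) : ℤ :=
  (Matrix.of fun i j => if s j = t i then 1 else 0).det

theorem minorForm_ιMulti_single {n : ℕ} (s t : Fin n → I) :
    minorForm n s (ιMulti R n fun i => Pi.single (t i) 1) = basisMinor s t := by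
  rw [minorForm_ιMulti, basisMinor, ← eq_intCast (Int.castRingHom R), RingHom.map_det]
  congr 1
  ext i j
  simp only [Matrix.of_apply, RingHom.mapMatrix_apply, Matrix.map_apply, Pi.single_apply]
  split_ifs <;> simp

def basisGram {m n a b : ℕ} (s : Fin (m + n) → I) (p : Fin a → Fin m → I)
    (q : Fin b → Fin n → I) : Matrix (Fin a) (Fin b) ℤ :=
  Matrix.of fun t t' => basisMinor s (Fin.append (p t) (q t'))

theorem minorForm_sum_mul_sum {m n a b : ℕ} (s : Fin (m + n) → I) (c : Fin a → R)
    (p : Fin a → Fin m → I) (d : Fin b → R) (q : Fin b → Fin n → I) :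
    minorForm (m + n) s ((∑ t, c t • ιMulti R m fun i => Pi.single (p t i) 1) *
      (∑ t', d t' • ιMulti R n fun i => Pi.single (q t' i) 1)) =
      ∑ t, ∑ t', c t * d t' * basisGram s p q t t' := by
  simp only [Finset.sum_mul_sum, smul_mul_smul_comm, ιMulti_mul_ιMulti, map_sum, map_smul,
    smul_eq_mul]
  refine Finset.sum_congr rfl fun t _ => Finset.sum_congr rfl fun t' _ => ?_
  rw [basisGram, Matrix.of_apply, ← minorForm_ιMulti_single]
  congr 3
  ext i
  refine Fin.addCases (fun i => ?_) (fun i => ?_) i <;> simp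

end ExteriorAlgebra

/-- For `φ₁ = x₁∧x₂ + x₃∧x₄`, `φ₂ = x₁∧x₃ + x₄∧x₅`, `φ₃ = x₁∧x₅ + x₂∧x₃` in `Λ²W`,
`dim W = 5`: every nonzero linear combination has rank 4, i.e. if the wedge square of
`αφ₁ + βφ₂ + γφ₃` vanishes then `α = β = γ = 0`. -/
theorem plane_disjoint_from_grassmannian
    {k : Type*} [Field k] [CharZero k] (α β γ : k) :
    let e : Fin 5 → (Fin 5 → k) := fun i => Pi.single i 1
    let φ₁ : ExteriorAlgebra k (Fin 5 → k) := ι k (e 0) * ι k (e 1) + ι k (e 2) * ι k (e 3)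
    let φ₂ : ExteriorAlgebra k (Fin 5 → k) := ι k (e 0) * ι k (e 2) + ι k (e 3) * ι k (e 4)
    let φ₃ : ExteriorAlgebra k (Fin 5 → k) := ι k (e 0) * ι k (e 4) + ι k (e 1) * ι k (e 2)
    let ψ := α • φ₁ + β • φ₂ + γ • φ₃
    ψ * ψ = 0 → α = 0 ∧ β = 0 ∧ γ = 0 := by
  intro e φ₁ φ₂ φ₃ ψ hψ
  let c : Fin 6 → k := ![α, α, β, β, γ, γ]
  let p : Fin 6 → Fin 2 → Fin 5 := ![![0, 1], ![2, 3], ![0, 2], ![3, 4], ![0, 4], ![1, 2]]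
  have hψ_sum : ψ = ∑ t, c t • ιMulti k 2 fun i => e (p t i) := by
    simp only [Fin.sum_univ_succ, Fin.sum_univ_zero, ιMulti_two]
    simp [ψ, φ₁, φ₂, φ₃, c, p, e, smul_add, add_assoc]
  have hcoord (s : Fin 4 → Fin 5) : ∑ t, ∑ t', c t * c t' * basisGram s p p t t' = 0 := by
    rw [← minorForm_sum_mul_sum, ← hψ_sum, hψ, map_zero]
  have hα : α = 0 := by
    have h := hcoord ![0, 1, 2, 3]
    rw [show basisGram ![0, 1, 2, 3] p p = !![0, 1, 0, 0, 0, 0; 1, 0, 0, 0, 0, 0;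
      0, 0, 0, 0, 0, 0; 0, 0, 0, 0, 0, 0; 0, 0, 0, 0, 0, 0; 0, 0, 0, 0, 0, 0] by decide +kernel] at h
    simpa [Fin.sum_univ_succ, c] using h
  have hγ : γ = 0 := by
    have h := hcoord ![0, 1, 2, 4]
    rw [show basisGram ![0, 1, 2, 4] p p = !![0, 0, 0, 0, 0, 0; 0, 0, 0, 0, 0, 0;
      0, 0, 0, 0, 0, 0; 0, 0, 0, 0, 0, 0; 0, 0, 0, 0, 0, 1; 0, 0, 0, 0, 1, 0] by decide +kernel] at h
    simpa [Fin.sum_univ_succ, c] using h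
  have hβ : β = 0 := by
    have h := hcoord ![0, 2, 3, 4]
    rw [show basisGram ![0, 2, 3, 4] p p = !![0, 0, 0, 0, 0, 0; 0, 0, 0, 0, 1, 0;
      0, 0, 0, 1, 0, 0; 0, 0, 1, 0, 0, 0; 0, 1, 0, 0, 0, 0; 0, 0, 0, 0, 0, 0] by decide +kernel] at h
    simpa [Fin.sum_univ_succ, c, hα] using h
  exact ⟨hα, hβ, hγ⟩
end

section
/- Let W be a 4-dimensional vector space with basis x₁,…,x₄ over a field of characteristic zero, and let φ₅ = x₁∧x₂, φ₆ = x₁∧x₄, φ₇ = x₂∧x₃, φ₈ = x₁∧x₃ − x₂∧x₄. Then the quadratic form q(α,β,γ,δ) defined by (αφ₅+βφ₆+γφ₇+δφ₈)∧(αφ₅+βφ₆+γφ₇+δφ₈) = q(α,β,γ,δ)·x₁∧x₂∧x₃∧x₄ has rank 3 as a quadratic form in (α,β,γ,δ). -/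
open ExteriorAlgebra

section helpers
variable {k : Type*} [Field k]
set_option linter.unusedSectionVars false

private lemma swB (x y : Fin 4 → k) : ι k x * ι k y = -(ι k y * ι k x) :=
  eq_neg_of_add_eq_zero_left (ι_add_mul_swap x y)

private lemma swA (x y : Fin 4 → k) (v : ExteriorAlgebra k (Fin 4 → k)) :
    ι k x * (ι k y * v) = -(ι k y * (ι k x * v)) := by
  rw [← mul_assoc, swB, neg_mul, mul_assoc]

private lemma sqA (x : Fin 4 → k) (v : ExteriorAlgebra k (Fin 4 → k)) :
    ι k x * (ι k x * v) = 0 := by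
  rw [← mul_assoc, ι_sq_zero, zero_mul]

private lemma P1 (a b d : Fin 4 → k) :
    (ι k a * ι k b) * (ι k a * ι k d) = 0 := by
  simp only [mul_assoc]
  rw [swA b a (ι k d)]
  simp [mul_neg, sqA]

private lemma P2 (a b c : Fin 4 → k) :
    (ι k a * ι k b) * (ι k c * ι k a) = 0 := by
  simp only [mul_assoc]
  rw [swB c a]
  simp only [mul_neg, neg_eq_zero]
  rw [swA b a (ι k c)]
  simp [mul_neg, sqA]

private lemma P3 (a b d : Fin 4 → k) :
    (ι k a * ι k b) * (ι k b * ι k d) = 0 := by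
  simp [mul_assoc, sqA]

private lemma P4 (a b c : Fin 4 → k) :
    (ι k a * ι k b) * (ι k c * ι k b) = 0 := by
  simp only [mul_assoc]
  rw [swB c b]
  simp [mul_neg, sqA]

private lemma G1 (a b c d : Fin 4 → k) :
    (ι k a * ι k d) * (ι k b * ι k c) = ((ι k a * ι k b) * ι k c) * ι k d := by
  simp only [mul_assoc]
  rw [swA d b (ι k c), swB d c]
  simp [mul_neg, neg_neg]

private lemma G2 (a b c d : Fin 4 → k) :
    (ι k b * ι k c) * (ι k a * ι k d) = ((ι k a * ι k b) * ι k c) * ι k d := by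
  simp only [mul_assoc]
  rw [swA c a (ι k d), mul_neg, swA b a (ι k c * ι k d), neg_neg]

private lemma G3 (a b c d : Fin 4 → k) :
    (ι k a * ι k c) * (ι k b * ι k d) = -(((ι k a * ι k b) * ι k c) * ι k d) := by
  simp only [mul_assoc]
  rw [swA c b (ι k d)]
  simp [mul_neg]

private lemma G4 (a b c d : Fin 4 → k) :
    (ι k b * ι k d) * (ι k a * ι k c) = -(((ι k a * ι k b) * ι k c) * ι k d) := by
  simp only [mul_assoc]
  rw [swA d a (ι k c), mul_neg, swB d c]
  simp only [mul_neg, neg_neg]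
  rw [swA b a (ι k c * ι k d)]

variable (k) in
private def Bmap : (Fin 4 → k) →ₗ[k] (Fin 4 → k) →ₗ[k] k :=
  LinearMap.mk₂ k (fun c d => c 1 * d 2 + c 2 * d 1 + 2 * (c 3 * d 3))
    (by intros; simp [Pi.add_apply]; ring) (by intros; simp; ring)
    (by intros; simp [Pi.add_apply]; ring) (by intros; simp; ring)

private lemma Bmap_apply (c d : Fin 4 → k) :
    Bmap k c d = c 1 * d 2 + c 2 * d 1 + 2 * (c 3 * d 3) := rfl

private lemma Bmap_range [CharZero k] : LinearMap.range (Bmap k)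
    = Submodule.span k (Set.range ![(LinearMap.proj 1 : (Fin 4 → k) →ₗ[k] k),
        LinearMap.proj 2, LinearMap.proj 3]) := by
  apply le_antisymm
  · rintro _ ⟨c, rfl⟩
    have : Bmap k c = c 2 • (LinearMap.proj 1 : (Fin 4 → k) →ₗ[k] k)
        + c 1 • LinearMap.proj 2 + (2 * c 3) • LinearMap.proj 3 := by
      ext d; simp [Bmap_apply]; ring
    rw [this]
    refine Submodule.add_mem _ (Submodule.add_mem _ ?_ ?_) ?_ <;>
      refine Submodule.smul_mem _ _ (Submodule.subset_span ?_)
    · exact ⟨0, rfl⟩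
    · exact ⟨1, rfl⟩
    · exact ⟨2, rfl⟩
  · rw [Submodule.span_le]
    rintro _ ⟨i, rfl⟩
    fin_cases i
    · exact ⟨Pi.single 2 1, by ext d; simp [Bmap_apply, Pi.single_apply]⟩
    · exact ⟨Pi.single 1 1, by ext d; simp [Bmap_apply, Pi.single_apply]⟩
    · refine ⟨Pi.single 3 (2⁻¹ : k), ?_⟩
      ext d
      simp [Bmap_apply, Pi.single_apply]

private lemma proj_linearIndependent [CharZero k] :
    LinearIndependent k ![(LinearMap.proj 1 : (Fin 4 → k) →ₗ[k] k),
      LinearMap.proj 2, LinearMap.proj 3] := by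
  rw [Fintype.linearIndependent_iff]
  intro g hg i
  have h1 := LinearMap.congr_fun hg (Pi.single 1 1)
  have h2 := LinearMap.congr_fun hg (Pi.single 2 1)
  have h3 := LinearMap.congr_fun hg (Pi.single 3 1)
  simp [Fin.sum_univ_three, Pi.single_apply] at h1 h2 h3
  fin_cases i <;> simp [h1, h2, h3]

private lemma Bmap_rank [CharZero k] :
    Module.finrank k (LinearMap.range (Bmap k)) = 3 := by
  rw [Bmap_range, finrank_span_eq_card proj_linearIndependent]
  simp

end helpers

/-- For `φ₅ = x₁∧x₂`, `φ₆ = x₁∧x₄`, `φ₇ = x₂∧x₃`, `φ₈ = x₁∧x₃ − x₂∧x₄` in `Λ²W`,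
`dim W = 4`: the quadratic form `q` on coefficients `(α,β,γ,δ)` defined by
`(αφ₅+βφ₆+γφ₇+δφ₈)² = q(α,β,γ,δ) • x₁∧x₂∧x₃∧x₄` has rank 3, i.e. its associated
symmetric bilinear form `B` has rank 3. -/
theorem wedge_square_quadratic_form_rank_three
    {k : Type*} [Field k] [CharZero k] :
    let e : Fin 4 → (Fin 4 → k) := fun i => Pi.single i 1
    let φ₅ : ExteriorAlgebra k (Fin 4 → k) := ι k (e 0) * ι k (e 1)
    let φ₆ : ExteriorAlgebra k (Fin 4 → k) := ι k (e 0) * ι k (e 3)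
    let φ₇ : ExteriorAlgebra k (Fin 4 → k) := ι k (e 1) * ι k (e 2)
    let φ₈ : ExteriorAlgebra k (Fin 4 → k) := ι k (e 0) * ι k (e 2) - ι k (e 1) * ι k (e 3)
    let comb : (Fin 4 → k) → ExteriorAlgebra k (Fin 4 → k) :=
      fun c => c 0 • φ₅ + c 1 • φ₆ + c 2 • φ₇ + c 3 • φ₈
    let vol : ExteriorAlgebra k (Fin 4 → k) := ι k (e 0) * ι k (e 1) * ι k (e 2) * ι k (e 3)
    ∃ B : (Fin 4 → k) →ₗ[k] (Fin 4 → k) →ₗ[k] k,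
      (∀ c d : Fin 4 → k, comb c * comb d = B c d • vol) ∧
        Module.finrank k (LinearMap.range B) = 3 := by
  intro e φ₅ φ₆ φ₇ φ₈ comb vol
  refine ⟨Bmap k, ?_, Bmap_rank⟩
  · intro c d
    have hN1 : (ι k (e 0) * ι k (e 3)) * (ι k (e 1) * ι k (e 2))
        = ι k (e 0) * ι k (e 1) * ι k (e 2) * ι k (e 3) := G1 _ _ _ _
    have hN2 : (ι k (e 1) * ι k (e 2)) * (ι k (e 0) * ι k (e 3))
        = ι k (e 0) * ι k (e 1) * ι k (e 2) * ι k (e 3) := G2 _ _ _ _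
    have hN3 : (ι k (e 0) * ι k (e 2)) * (ι k (e 1) * ι k (e 3))
        = -(ι k (e 0) * ι k (e 1) * ι k (e 2) * ι k (e 3)) := G3 _ _ _ _
    have hN4 : (ι k (e 1) * ι k (e 3)) * (ι k (e 0) * ι k (e 2))
        = -(ι k (e 0) * ι k (e 1) * ι k (e 2) * ι k (e 3)) := G4 _ _ _ _
    simp only [comb, φ₅, φ₆, φ₇, φ₈, vol, Bmap_apply]
    simp only [mul_add, add_mul, sub_mul, mul_sub, smul_sub, smul_mul_assoc,
      mul_smul_comm, smul_smul, P1, P2, P3, P4, hN1, hN2, hN3, hN4,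
      smul_zero, add_zero, zero_add, zero_sub, sub_zero, smul_neg]
    module
end
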